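/- arXiv:2401.00156 — 2 statements merged into one kernel-verified Lean document; each statement's English description precedes it below -/
import Mathlib

section
/- Let p be a prime and let R be a radical p-subgroup of a finite group G. If A is a subgroup of the center Z(R) such that A is stable under conjugation by every element of N_G(R), then R is a radical p-subgroup of N_G(A) and also a radical p-subgroup of the centralizer Z_G(A). -/
/-- The largest normal `p`-subgroup `O_p(G)` of a group `G`:
the join of all normal `p`-subgroups of `G`. -/
def pCore' (p : ℕ) (G : Type*) [Group G] : Subgroup G :=
  sSup {H : Subgroup G | H.Normal ∧ IsPGroup p H}

/-- `Q` is a radical `p`-subgroup of `G` if `Q = O_p(N_G(Q))`. -/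
def IsRadicalPSubgroup (p : ℕ) {G : Type*} [Group G] (Q : Subgroup G) : Prop :=
  Q.subgroupOf (Subgroup.normalizer (Q : Set G)) = pCore' p (Subgroup.normalizer (Q : Set G))

/-!
`O_p` is characteristic, so for `K ⊴ M` the `p`-core of `K` is a normal `p`-subgroup of `M` and
hence lies in `O_p(M)`. Every element of `N_G(R)` normalizes `A`, hence `C_G(A)`, so
`N_{C_G(A)}(R) = N_G(R) ⊓ C_G(A)` is normal in `N_G(R)` and its `p`-core lies in
`O_p(N_G(R)) = R`; conversely `R` is a normal `p`-subgroup of it. For `N_G(A)` there is nothing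
to do, since `N_{N_G(A)}(R) = N_G(R)`.
-/

open Subgroup

section pCore'

variable {p : ℕ} {G G' : Type*} [Group G] [Group G']

lemma le_pCore' {H : Subgroup G} (hN : H.Normal) (hH : IsPGroup p H) : H ≤ pCore' p G :=
  le_sSup ⟨hN, hH⟩

instance pCore'_normal : (pCore' p G).Normal :=
  sSup_normal _ fun _ h => h.1

lemma isPGroup_pCore' : IsPGroup p (pCore' p G) :=
  Sylow.sSup_of_normal _ (fun _ h => h.2) fun _ h => h.1

lemma map_pCore'_le (e : G ≃* G') : (pCore' p G).map e.toMonoidHom ≤ pCore' p G' :=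
  le_pCore' (pCore'_normal.map _ e.surjective) (isPGroup_pCore'.map _)

lemma map_pCore'_eq (e : G ≃* G') : (pCore' p G).map e.toMonoidHom = pCore' p G' := by
  refine le_antisymm (map_pCore'_le e) ?_
  calc pCore' p G' = ((pCore' p G').map e.symm.toMonoidHom).map e.toMonoidHom := by
        rw [map_map]; simp
    _ ≤ (pCore' p G).map e.toMonoidHom := map_mono (map_pCore'_le e.symm)

end pCore'

namespace Subgroup

variable {p : ℕ} {G G' : Type*} [Group G] [Group G'] {K M S : Subgroup G}

/-- `O_p(M)` for a subgroup `M`, as a subgroup of the ambient group. -/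
def pCore (p : ℕ) (M : Subgroup G) : Subgroup G :=
  (pCore' p M).map M.subtype

lemma pCore_le : M.pCore p ≤ M :=
  map_subtype_le _

lemma isPGroup_pCore : IsPGroup p (M.pCore p) :=
  isPGroup_pCore'.map _

lemma le_pCore (hSM : S ≤ M) (hS : IsPGroup p S) (hMS : M ≤ normalizer (S : Set G)) :
    S ≤ M.pCore p := by
  have hcore : S.subgroupOf M ≤ pCore' p M :=
    le_pCore' ((normal_subgroupOf_iff_le_normalizer hSM).2 hMS)
      (hS.comap_of_injective _ M.subtype_injective)
  simpa [pCore, subgroupOf_map_subtype, inf_eq_left.2 hSM] using map_mono (f := M.subtype) hcore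

lemma map_pCore (f : G →* G') (hf : Function.Injective f) :
    (M.pCore p).map f = (M.map f).pCore p := by
  let e := M.equivMapOfInjective f hf
  have hcomp : (M.map f).subtype.comp e.toMonoidHom = f.comp M.subtype := by
    ext; rfl
  rw [pCore, pCore, ← map_pCore'_eq e, map_map, map_map, hcomp]

lemma normalizer_le_normalizer_pCore :
    normalizer (M : Set G) ≤ normalizer (M.pCore p : Set G) := by
  intro g hg
  rw [mem_normalizer_iff_map_conj_eq] at hg ⊢
  rw [map_pCore _ (MulAut.conj g).injective, hg]

lemma pCore_le_pCore_of_le_normalizer (hKM : K ≤ M) (hMK : M ≤ normalizer (K : Set G)) :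
    K.pCore p ≤ M.pCore p :=
  le_pCore (pCore_le.trans hKM) isPGroup_pCore (hMK.trans normalizer_le_normalizer_pCore)

lemma normalizer_le_normalizer_centralizer (A : Subgroup G) :
    normalizer (A : Set G) ≤ normalizer (centralizer (A : Set G) : Set G) := by
  intro g hg c
  simp only [SetLike.mem_coe, mem_centralizer_iff]
  constructor
  · intro hc a ha
    have hcomm := hc _ ((mem_normalizer_iff''.1 hg a).1 ha)
    calc a * (g * c * g⁻¹) = g * ((g⁻¹ * a * g) * c) * g⁻¹ := by group
      _ = g * c * g⁻¹ * a := by rw [hcomm]; group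
  · intro hc a ha
    have hcomm := hc _ ((mem_normalizer_iff.1 hg a).1 ha)
    calc a * c = g⁻¹ * ((g * a * g⁻¹) * (g * c * g⁻¹)) * g := by group
      _ = c * a := by rw [hcomm]; group

end Subgroup

section IsRadicalPSubgroup

variable {p : ℕ} {G : Type*} [Group G]

lemma isRadicalPSubgroup_iff {Q : Subgroup G} :
    IsRadicalPSubgroup p Q ↔ Q = (normalizer (Q : Set G)).pCore p := by
  rw [IsRadicalPSubgroup, ← (map_injective (normalizer (Q : Set G)).subtype_injective).eq_iff,
    subgroupOf_map_subtype, inf_eq_left.2 le_normalizer]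
  rfl

lemma isRadicalPSubgroup_subgroupOf_iff {R H : Subgroup G} (hRH : R ≤ H) :
    IsRadicalPSubgroup p (R.subgroupOf H) ↔ R = (normalizer (R : Set G) ⊓ H).pCore p := by
  rw [isRadicalPSubgroup_iff, ← subgroupOf_normalizer_eq hRH,
    ← (map_injective H.subtype_injective).eq_iff, map_pCore _ H.subtype_injective,
    subgroupOf_map_subtype, subgroupOf_map_subtype, inf_eq_left.2 hRH]

end IsRadicalPSubgroup

theorem statement_2_general {G : Type*} [Group G] {p : ℕ}
    (R A : Subgroup G) (hR : IsRadicalPSubgroup p R)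
    (hA : A ≤ R ⊓ Subgroup.centralizer (R : Set G))
    (hstab : Subgroup.normalizer (R : Set G) ≤ Subgroup.normalizer (A : Set G)) :
    IsRadicalPSubgroup p (R.subgroupOf (Subgroup.normalizer (A : Set G))) ∧
      IsRadicalPSubgroup p (R.subgroupOf (Subgroup.centralizer (A : Set G))) := by
  have hRC : R ≤ centralizer (A : Set G) := le_centralizer_iff.2 (hA.trans inf_le_right)
  have hRrad : R = (normalizer (R : Set G)).pCore p := isRadicalPSubgroup_iff.1 hR
  refine ⟨?_, ?_⟩
  · rw [isRadicalPSubgroup_subgroupOf_iff (hRC.trans (centralizer_le_normalizer _)),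
      inf_eq_left.2 hstab]
    exact hRrad
  · rw [isRadicalPSubgroup_subgroupOf_iff hRC]
    have hnormal : normalizer (R : Set G) ≤
        normalizer ((normalizer (R : Set G) ⊓ centralizer (A : Set G) : Subgroup G) : Set G) :=
      (le_inf le_normalizer (hstab.trans (normalizer_le_normalizer_centralizer A))).trans
        inf_normalizer_le_normalizer_inf
    refine le_antisymm ?_ ?_
    · exact le_pCore (le_inf le_normalizer hRC) (hRrad ▸ isPGroup_pCore) inf_le_left
    · calc (normalizer (R : Set G) ⊓ centralizer (A : Set G)).pCore p
          ≤ (normalizer (R : Set G)).pCore p := pCore_le_pCore_of_le_normalizer inf_le_left hnormal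
        _ = R := hRrad.symm

/-- Let `R` be a radical `p`-subgroup of a finite group `G`, and let `A` be a subgroup of the
center `Z(R) = R ⊓ C_G(R)` which is stable under conjugation by every element of `N_G(R)`
(i.e. `N_G(R) ≤ N_G(A)`).  Then `R` is a radical `p`-subgroup of `N_G(A)` and of `C_G(A)`. -/
theorem statement_2 {G : Type*} [Group G] [Finite G] {p : ℕ} (hp : p.Prime)
    (R A : Subgroup G) (hR : IsRadicalPSubgroup p R)
    (hA : A ≤ R ⊓ Subgroup.centralizer (R : Set G))
    (hstab : Subgroup.normalizer (R : Set G) ≤ Subgroup.normalizer (A : Set G)) :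
    IsRadicalPSubgroup p (R.subgroupOf (Subgroup.normalizer (A : Set G))) ∧
      IsRadicalPSubgroup p (R.subgroupOf (Subgroup.centralizer (A : Set G))) :=
  statement_2_general R A hR hA hstab
end

section
/- Let q be an odd prime power with 4 dividing q + 1, let m ≥ 1 be an integer and set n = 2m, and let b, b' ∈ F_q satisfy b² + b'² = −1 and b ≠ 0. Suppose X, Y ∈ GL_n(F_q) satisfy XYX⁻¹Y⁻¹ = −I_n and X² = Y² = −I_n. Then there exists g ∈ GL_n(F_q) such that gXg⁻¹ is the block matrix with off-diagonal blocks I_m (top right) and −I_m (bottom left) and zero diagonal blocks, and gYg⁻¹ is the block matrix with blocks b·I_m (top left), b'·I_m (top right), b'·I_m (bottom left) and −b·I_m (bottom right). -/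
/-!
As q is odd, 2 is invertible in F. Since b² + b'² = -1, the matrix S = bY + b'XY is an
involution anticommuting with X, and Y = -bS - b'SX. Thus X exchanges the two eigenspaces
of S, so V = N ⊕ XN where N is the (-1)-eigenspace and dim N = m. In the basis (eᵢ, -Xeᵢ),
for a basis (eᵢ) of N, the matrices X and Y take the stated block forms.
-/

open Module Matrix

theorem Units.mul_eq_neg_mul_of_commutator_eq_neg_one {R : Type*} [Monoid R] [HasDistribNeg R]
    {u v : Rˣ} (h : ((u * v * u⁻¹ * v⁻¹ : Rˣ) : R) = -1) : (v : R) * u = -(u * v) := by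
  have := congrArg (· * ((v : R) * u)) h
  simp only [Units.val_mul, mul_assoc, Units.inv_mul_cancel_left, Units.inv_mul, mul_one,
    neg_one_mul] at this
  rw [this, neg_neg]

theorem FiniteField.two_ne_zero_of_odd_card {F : Type*} [Field F] [Fintype F]
    (h : Odd (Fintype.card F)) : (2 : F) ≠ 0 :=
  Ring.two_ne_zero fun h2 => by
    rw [FiniteField.even_card_iff_char_two, ← Nat.even_iff] at h2
    exact Nat.not_even_iff_odd.mpr h h2

section Algebra

variable {K A : Type*} [CommRing K] [Ring A] [Algebra K A]

theorem smul_add_smul_mul_self_of_anticomm {y z : A} (hy : y * y = -1) (hz : z * z = -1)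
    (hyz : z * y = -(y * z)) (b b' : K) :
    (b • y + b' • z) * (b • y + b' • z) = -(b ^ 2 + b' ^ 2) • 1 := by
  simp only [add_mul, mul_add, smul_mul_smul_comm, hy, hz, hyz]
  module

variable {x y : A} (hx : x * x = -1) (hy : y * y = -1) (hxy : y * x = -(x * y)) (b b' : K)
include hx hxy

theorem smul_add_smul_mul_mul_right :
    (b • y + b' • (x * y)) * x = b' • y - b • (x * y) := by
  simp only [add_mul, smul_mul_assoc, hxy, mul_assoc x y x, ← mul_assoc x x y, hx, neg_one_mul,
    mul_neg, neg_neg]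
  module

theorem smul_add_smul_mul_mul_comm :
    (b • y + b' • (x * y)) * x = -(x * (b • y + b' • (x * y))) := by
  simp only [smul_add_smul_mul_mul_right hx hxy, mul_add, mul_smul_comm, ← mul_assoc x x y, hx,
    neg_one_mul]
  module

theorem neg_smul_sub_smul_mul_eq (hbb : b ^ 2 + b' ^ 2 = -1) :
    -(b • (b • y + b' • (x * y))) - b' • ((b • y + b' • (x * y)) * x) = y := by
  rw [smul_add_smul_mul_mul_right hx hxy]
  linear_combination (norm := module) (-hbb) • y

include hy in
theorem smul_add_smul_mul_mul_self (hbb : b ^ 2 + b' ^ 2 = -1) :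
    (b • y + b' • (x * y)) * (b • y + b' • (x * y)) = 1 := by
  have hxyxy : x * y * (x * y) = -1 := by
    rw [mul_assoc, ← mul_assoc y, hxy, neg_mul, mul_neg, ← mul_assoc, ← mul_assoc, hx,
      neg_one_mul, neg_mul, neg_neg, hy]
  have hxyy : x * y * y = -(y * (x * y)) := by
    rw [mul_assoc, hy, ← mul_assoc, hxy, neg_mul, mul_assoc, hy, neg_neg]
  rw [smul_add_smul_mul_self_of_anticomm hy hxyxy hxyy, hbb, neg_neg, one_smul]

end Algebra

section Splitting

variable {K V : Type*} [Field K] [AddCommGroup V] [Module K V] {s x : End K V}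

theorem Module.End.mem_eigenspace_neg_one {v : V} : v ∈ s.eigenspace (-1) ↔ s v = -v := by
  rw [End.mem_eigenspace_iff, neg_one_smul]

theorem Module.End.eq_zero_of_eq_apply_of_anticomm (h2 : (2 : K) ≠ 0) (hsx : s * x = -(x * s))
    {u w : V} (hu : s u = -u) (hw : s w = -w) (h : u = x w) : u = 0 := by
  have hsu : s u = u := by
    rw [h, ← End.mul_apply, hsx, LinearMap.neg_apply, End.mul_apply, hw, map_neg, neg_neg]
  have : (2 : K) • u = 0 := by rw [two_smul]; nth_rewrite 1 [← hsu]; rw [hu, neg_add_cancel]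
  exact (smul_eq_zero.mp this).resolve_left h2

theorem Module.End.exists_sub_apply_eq_of_anticomm (h2 : (2 : K) ≠ 0) (hs : s * s = 1)
    (hx : x * x = -1) (hsx : s * x = -(x * s)) (v : V) :
    ∃ u w, s u = -u ∧ s w = -w ∧ u - x w = v := by
  have hss (w : V) : s (s w) = w := by rw [← End.mul_apply, hs, End.one_apply]
  refine ⟨(2 : K)⁻¹ • (v - s v), x ((2 : K)⁻¹ • (v + s v)), ?_, ?_, ?_⟩
  · rw [map_smul, map_sub, hss, ← smul_neg, neg_sub]
  · rw [← End.mul_apply, hsx, LinearMap.neg_apply, End.mul_apply, map_smul, map_add, hss,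
      add_comm]
  · rw [← End.mul_apply, hx, LinearMap.neg_apply, End.one_apply, sub_neg_eq_add, ← smul_add,
      sub_add_add_cancel, ← two_smul K v, smul_smul, inv_mul_cancel₀ h2, one_smul]

variable (h2 : (2 : K) ≠ 0) (hs : s * s = 1) (hx : x * x = -1) (hsx : s * x = -(x * s))

noncomputable def Module.End.eigenspaceProdEquiv :
    (s.eigenspace (-1) × s.eigenspace (-1)) ≃ₗ[K] V :=
  LinearEquiv.ofBijective
    ((s.eigenspace (-1)).subtype ∘ₗ LinearMap.fst K _ _ -
      x ∘ₗ (s.eigenspace (-1)).subtype ∘ₗ LinearMap.snd K _ _) <| by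
    refine ⟨(injective_iff_map_eq_zero _).mpr ?_, fun v => ?_⟩
    · rintro ⟨⟨u, hu⟩, ⟨w, hw⟩⟩ h
      replace h : u = x w := sub_eq_zero.mp h
      rw [End.mem_eigenspace_neg_one] at hu hw
      have hu0 : u = 0 := End.eq_zero_of_eq_apply_of_anticomm h2 hsx hu hw h
      have hw0 : w = 0 :=
        calc w = -(x (x w)) := by simp [← End.mul_apply, hx]
          _ = 0 := by rw [← h, hu0, map_zero, neg_zero]
      simp [hu0, hw0]
    · obtain ⟨u, w, hu, hw, huw⟩ := End.exists_sub_apply_eq_of_anticomm h2 hs hx hsx v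
      rw [← End.mem_eigenspace_neg_one] at hu hw
      exact ⟨(⟨u, hu⟩, ⟨w, hw⟩), huw⟩

theorem Module.End.eigenspaceProdEquiv_apply (p : s.eigenspace (-1) × s.eigenspace (-1)) :
    End.eigenspaceProdEquiv h2 hs hx hsx p = (p.1 : V) - x p.2 :=
  rfl

theorem Module.End.apply_eigenspaceProdEquiv (u w : s.eigenspace (-1)) :
    x (End.eigenspaceProdEquiv h2 hs hx hsx (u, w)) =
      End.eigenspaceProdEquiv h2 hs hx hsx (w, -u) := by
  simp only [End.eigenspaceProdEquiv_apply, map_sub, ← End.mul_apply, hx, LinearMap.neg_apply,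
    End.one_apply, Submodule.coe_neg, map_neg]
  abel

theorem Module.End.apply_eigenspaceProdEquiv_of_anticomm {y : End K V} (hxy : y * x = -(x * y))
    {b b' : K} (hys : -(b • s) - b' • (s * x) = y) (u w : s.eigenspace (-1)) :
    y (End.eigenspaceProdEquiv h2 hs hx hsx (u, w)) =
      End.eigenspaceProdEquiv h2 hs hx hsx (b • u + b' • w, b' • u - b • w) := by
  have hy (v : V) (hv : v ∈ s.eigenspace (-1)) : y v = b • v - b' • x v := by
    rw [End.mem_eigenspace_neg_one] at hv
    rw [← hys, LinearMap.sub_apply, LinearMap.neg_apply, LinearMap.smul_apply,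
      LinearMap.smul_apply, hsx, LinearMap.neg_apply, End.mul_apply, hv, map_neg]
    module
  have hxx (v : V) : x (x v) = -v := by simp [← End.mul_apply, hx]
  simp only [End.eigenspaceProdEquiv_apply, map_sub, ← End.mul_apply y x, hxy,
    LinearMap.neg_apply, End.mul_apply, hy u u.2, hy w w.2, Submodule.coe_add, Submodule.coe_sub,
    Submodule.coe_smul, map_smul, hxx]
  module

end Splitting

theorem LinearMap.toMatrix_map_prod_eq_fromBlocks {K N V ι : Type*} [CommRing K] [AddCommGroup N]
    [Module K N] [AddCommGroup V] [Module K V] [Fintype ι] [DecidableEq ι]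
    (bN : Basis ι K N) (E : (N × N) ≃ₗ[K] V) (f : End K V) (a c d e : K)
    (hf : ∀ u w, f (E (u, w)) = E (a • u + c • w, d • u + e • w)) :
    toMatrix ((bN.prod bN).map E) ((bN.prod bN).map E) f =
      fromBlocks (a • 1) (c • 1) (d • 1) (e • 1) := by
  ext i j
  rw [toMatrix_apply, Basis.map_apply, Basis.map_repr, LinearEquiv.trans_apply]
  rcases i with i | i <;> rcases j with j | j <;>
    simp [Basis.prod_apply, hf, Basis.prod_repr_inl, Basis.prod_repr_inr, Finsupp.single_apply,
      one_apply, eq_comm]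

theorem Module.End.exists_basis_toMatrix_eq_fromBlocks {K V : Type*} [Field K] [AddCommGroup V]
    [Module K V] [FiniteDimensional K V] (h2 : (2 : K) ≠ 0) {m : ℕ} (hV : finrank K V = m + m)
    {x y : End K V} (hx : x * x = -1) (hy : y * y = -1) (hxy : y * x = -(x * y)) {b b' : K}
    (hbb : b ^ 2 + b' ^ 2 = -1) :
    ∃ B : Basis (Fin m ⊕ Fin m) K V,
      LinearMap.toMatrix B B x = fromBlocks 0 1 (-1) 0 ∧
      LinearMap.toMatrix B B y = fromBlocks (b • 1) (b' • 1) (b' • 1) (-(b • 1)) := by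
  set s := b • y + b' • (x * y)
  have hs : s * s = 1 := smul_add_smul_mul_mul_self hx hy hxy b b' hbb
  have hsx : s * x = -(x * s) := smul_add_smul_mul_mul_comm hx hxy b b'
  have hys : -(b • s) - b' • (s * x) = y := neg_smul_sub_smul_mul_eq hx hxy b b' hbb
  let E := End.eigenspaceProdEquiv h2 hs hx hsx
  have hN : finrank K (s.eigenspace (-1)) = m := by
    have := E.finrank_eq
    rw [finrank_prod, hV] at this
    omega
  let bN := finBasisOfFinrankEq K _ hN
  refine ⟨(bN.prod bN).map E, ?_, ?_⟩
  · rw [LinearMap.toMatrix_map_prod_eq_fromBlocks bN E x 0 1 (-1) 0 fun u w => by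
      simpa using End.apply_eigenspaceProdEquiv h2 hs hx hsx u w]
    simp
  · rw [LinearMap.toMatrix_map_prod_eq_fromBlocks bN E y b b' b' (-b) fun u w => by
      simpa [sub_eq_add_neg] using
        End.apply_eigenspaceProdEquiv_of_anticomm h2 hs hx hsx hxy hys u w]
    simp

theorem Matrix.exists_units_conj_eq_toMatrix {K ι : Type*} [CommRing K] [Fintype ι]
    [DecidableEq ι] (B : Basis ι K (ι → K)) :
    ∃ g : (Matrix ι ι K)ˣ, ∀ M : Matrix ι ι K,
      (g : Matrix ι ι K) * M * (g⁻¹ : (Matrix ι ι K)ˣ) =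
        LinearMap.toMatrix B B (toLinAlgEquiv' M) := by
  refine ⟨⟨B.toMatrix (Pi.basisFun K ι), (Pi.basisFun K ι).toMatrix B,
    Basis.toMatrix_mul_toMatrix_flip _ _, Basis.toMatrix_mul_toMatrix_flip _ _⟩, fun M => ?_⟩
  rw [← basis_toMatrix_mul_linearMap_toMatrix_mul_basis_toMatrix B (Pi.basisFun K ι) B
    (Pi.basisFun K ι), LinearMap.toMatrix_eq_toMatrix',
    show LinearMap.toMatrix' (toLinAlgEquiv' M) = M from LinearMap.toMatrix'_toLin' M]
  rfl

theorem statement_12_general (q : ℕ) (hq : Odd q)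
    (F : Type*) [Field F] [Fintype F] (hcard : Fintype.card F = q)
    (m : ℕ)
    (b b' : F) (hbb : b ^ 2 + b' ^ 2 = -1)
    (X Y : (Matrix (Fin m ⊕ Fin m) (Fin m ⊕ Fin m) F)ˣ)
    (hcomm : ((X * Y * X⁻¹ * Y⁻¹ : _ˣ) : Matrix (Fin m ⊕ Fin m) (Fin m ⊕ Fin m) F) = -1)
    (hX2 : ((X : Matrix (Fin m ⊕ Fin m) (Fin m ⊕ Fin m) F)) ^ 2 = -1)
    (hY2 : ((Y : Matrix (Fin m ⊕ Fin m) (Fin m ⊕ Fin m) F)) ^ 2 = -1) :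
    ∃ g : (Matrix (Fin m ⊕ Fin m) (Fin m ⊕ Fin m) F)ˣ,
      ((g * X * g⁻¹ : _ˣ) : Matrix (Fin m ⊕ Fin m) (Fin m ⊕ Fin m) F) =
        Matrix.fromBlocks 0 (1 : Matrix (Fin m) (Fin m) F) (-1) 0 ∧
      ((g * Y * g⁻¹ : _ˣ) : Matrix (Fin m ⊕ Fin m) (Fin m ⊕ Fin m) F) =
        Matrix.fromBlocks (b • (1 : Matrix (Fin m) (Fin m) F)) (b' • 1) (b' • 1) (-(b • 1)) := by
  have h2 : (2 : F) ≠ 0 := FiniteField.two_ne_zero_of_odd_card (hcard ▸ hq)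
  obtain ⟨B, hBX, hBY⟩ := End.exists_basis_toMatrix_eq_fromBlocks h2 (m := m) (by simp)
    (x := toLinAlgEquiv' X.val) (y := toLinAlgEquiv' Y.val)
    (by rw [← map_mul, ← sq, hX2, map_neg, map_one])
    (by rw [← map_mul, ← sq, hY2, map_neg, map_one])
    (by rw [← map_mul, Units.mul_eq_neg_mul_of_commutator_eq_neg_one hcomm, map_neg, map_mul])
    hbb
  obtain ⟨g, hg⟩ := exists_units_conj_eq_toMatrix B
  exact ⟨g, by rw [Units.val_mul, Units.val_mul, hg, hBX], by
    rw [Units.val_mul, Units.val_mul, hg, hBY]⟩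

/-- Let `q` be an odd prime power with `4 ∣ q + 1`, `F = F_q`, `m ≥ 1`, `n = 2m`, and let
`b, b' ∈ F_q` with `b² + b'² = -1` and `b ≠ 0`.  If `X, Y ∈ GL_n(F_q)` satisfy
`XYX⁻¹Y⁻¹ = -I` and `X² = Y² = -I`, then the pair `(X, Y)` is conjugate to the pair
`(antidiag(I_m, -I_m), [[b·I_m, b'·I_m], [b'·I_m, -b·I_m]])`. -/
theorem statement_12 (q : ℕ) (hq : Odd q) (hpp : IsPrimePow q) (hq4 : 4 ∣ q + 1)
    (F : Type*) [Field F] [Fintype F] (hcard : Fintype.card F = q)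
    (m : ℕ) (hm : 1 ≤ m)
    (b b' : F) (hbb : b ^ 2 + b' ^ 2 = -1) (hb : b ≠ 0)
    (X Y : (Matrix (Fin m ⊕ Fin m) (Fin m ⊕ Fin m) F)ˣ)
    (hcomm : ((X * Y * X⁻¹ * Y⁻¹ : _ˣ) : Matrix (Fin m ⊕ Fin m) (Fin m ⊕ Fin m) F) = -1)
    (hX2 : ((X : Matrix (Fin m ⊕ Fin m) (Fin m ⊕ Fin m) F)) ^ 2 = -1)
    (hY2 : ((Y : Matrix (Fin m ⊕ Fin m) (Fin m ⊕ Fin m) F)) ^ 2 = -1) :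
    ∃ g : (Matrix (Fin m ⊕ Fin m) (Fin m ⊕ Fin m) F)ˣ,
      ((g * X * g⁻¹ : _ˣ) : Matrix (Fin m ⊕ Fin m) (Fin m ⊕ Fin m) F) =
        Matrix.fromBlocks 0 (1 : Matrix (Fin m) (Fin m) F) (-1) 0 ∧
      ((g * Y * g⁻¹ : _ˣ) : Matrix (Fin m ⊕ Fin m) (Fin m ⊕ Fin m) F) =
        Matrix.fromBlocks (b • (1 : Matrix (Fin m) (Fin m) F)) (b' • 1) (b' • 1) (-(b • 1)) :=
  statement_12_general q hq F hcard m b b' hbb X Y hcomm hX2 hY2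
end
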